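/- arXiv:math/0306227 — 4 statements merged into one kernel-verified Lean document; each statement's English description precedes it below -/
import Mathlib

section
/- Let A be a k×k strictly upper triangular integer matrix and T_A the associated triangular operator. For nonnegative integers r_1,…,r_k with r_1 + ⋯ + r_k = k, if r_1 + ⋯ + r_i > i for some 1 ≤ i < k, then T_A(x_1^{r_1} ⋯ x_k^{r_k}) = 0. -/
open MvPolynomial

/-- One elimination step of the triangular operator: writing `f = Σ_r h_r · x_k^r`
(`x_k` the last variable), it returns `Σ_{r ≥ 1} h_r · (a_{1,k}x_1 + ⋯ + a_{k-1,k}x_{k-1})^{r-1}`. -/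
noncomputable def triStep (k : ℕ) (A : ℕ → ℕ → ℤ) (f : MvPolynomial (Fin (k + 1)) ℤ) :
    MvPolynomial (Fin k) ℤ :=
  f.support.sum fun m =>
    if m (Fin.last k) = 0 then 0
    else
      MvPolynomial.C (f.coeff m) *
        MvPolynomial.monomial (Finsupp.equivFunOnFinite.symm fun i : Fin k => m (Fin.castSucc i)) 1 *
        (∑ i : Fin k, MvPolynomial.C (A i k) * MvPolynomial.X i) ^ (m (Fin.last k) - 1)

/-- The triangular operator `T_A` of Definition 2, associated to a strictly upper
triangular integer matrix `A = (a_{i,j})` (indexed here from `0`). -/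
noncomputable def Tri : (k : ℕ) → (A : ℕ → ℕ → ℤ) → MvPolynomial (Fin k) ℤ → ℤ
  | 0, _, f => f.coeff 0
  | (k + 1), A, f => Tri k A (triStep k A f)

private lemma tri_zero (n : ℕ) (A : ℕ → ℕ → ℤ) : Tri n A 0 = 0 := by
  induction n with
  | zero => simp [Tri]
  | succ k ih =>
    have h : triStep k A 0 = 0 := by simp [triStep]
    simp [Tri, h, ih]

private lemma sum_univ_eq_degree {n : ℕ} (m : Fin n →₀ ℕ) :
    ∑ j, m j = m.degree := by
  rw [Finsupp.degree]
  exact (Finset.sum_subset (Finset.subset_univ _)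
    (fun x _ hx => Finsupp.notMem_support_iff.mp hx)).symm

private lemma step_inv (k : ℕ) (A : ℕ → ℕ → ℤ) (i : ℕ) (hik : i < k)
    (f : MvPolynomial (Fin (k + 1)) ℤ)
    (hf : ∀ m ∈ f.support,
      i + 2 ≤ ∑ j ∈ Finset.univ.filter (fun j : Fin (k + 1) => j.val ≤ i), m j ∧
      ∑ j, m j = k + 1) :
    ∀ m ∈ (triStep k A f).support,
      i + 2 ≤ ∑ j ∈ Finset.univ.filter (fun j : Fin k => j.val ≤ i), m j ∧
      ∑ j, m j = k := by
  classical
  intro m' hm'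
  have hsub := MvPolynomial.support_sum (s := f.support)
    (f := fun m => if m (Fin.last k) = 0 then 0
      else
        MvPolynomial.C (f.coeff m) *
          MvPolynomial.monomial
            (Finsupp.equivFunOnFinite.symm fun i : Fin k => m (Fin.castSucc i)) 1 *
          (∑ i : Fin k, MvPolynomial.C (A i k) * MvPolynomial.X i) ^ (m (Fin.last k) - 1))
  rw [triStep] at hm'
  obtain ⟨m, hm, hm'2⟩ := Finset.mem_biUnion.mp (hsub hm')
  obtain ⟨hpre, htot⟩ := hf m hm
  by_cases h0 : m (Fin.last k) = 0
  · simp [h0] at hm'2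
  rw [if_neg h0] at hm'2
  set d : Fin k →₀ ℕ := Finsupp.equivFunOnFinite.symm fun i : Fin k => m (Fin.castSucc i) with hd
  have hdapp : ∀ j : Fin k, d j = m (Fin.castSucc j) := fun j => rfl
  set L : MvPolynomial (Fin k) ℤ := ∑ i : Fin k, MvPolynomial.C (A i k) * MvPolynomial.X i
    with hL
  have hLhom : L.IsHomogeneous 1 := by
    refine IsHomogeneous.sum _ _ _ fun j _ => ?_
    exact MvPolynomial.isHomogeneous_C_mul_X _ _
  have hLpow : (L ^ (m (Fin.last k) - 1)).IsHomogeneous (m (Fin.last k) - 1) := by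
    simpa using hLhom.pow (m (Fin.last k) - 1)
  have : (MvPolynomial.C (f.coeff m) * MvPolynomial.monomial d 1 : MvPolynomial (Fin k) ℤ)
      = MvPolynomial.monomial d (f.coeff m) := by
    rw [MvPolynomial.C_mul_monomial, mul_one]
  rw [this] at hm'2
  have hsub2 := MvPolynomial.support_mul
    (MvPolynomial.monomial d (f.coeff m)) (L ^ (m (Fin.last k) - 1))
  obtain ⟨a, ha, b, hb, hab⟩ := Finset.mem_add.mp (hsub2 hm'2)
  have ha' : a = d := by
    have := MvPolynomial.support_monomial_subset ha
    simpa using this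
  subst ha' hab
  -- degree of b
  have hbdeg : ∑ j, b j = m (Fin.last k) - 1 := by
    rw [sum_univ_eq_degree]
    by_contra hne
    exact MvPolynomial.mem_support_iff.mp hb (hLpow.coeff_eq_zero hne)
  -- total degree of m over castSucc
  have hcast : ∑ j : Fin k, m (Fin.castSucc j) + m (Fin.last k) = k + 1 := by
    rw [← Fin.sum_univ_castSucc (f := fun j => m j)]
    exact htot
  constructor
  · -- prefix bound
    have h1 : ∑ j ∈ Finset.univ.filter (fun j : Fin (k + 1) => j.val ≤ i), m j
        = ∑ j ∈ Finset.univ.filter (fun j : Fin k => j.val ≤ i), m (Fin.castSucc j) := by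
      rw [Finset.sum_filter, Finset.sum_filter, Fin.sum_univ_castSucc]
      simp [Fin.val_last, Nat.not_le.mpr hik]
    have h2 : ∑ j ∈ Finset.univ.filter (fun j : Fin k => j.val ≤ i), (d + b) j
        ≥ ∑ j ∈ Finset.univ.filter (fun j : Fin k => j.val ≤ i), d j := by
      apply Finset.sum_le_sum
      intro j _
      simp [Finsupp.add_apply]
    calc i + 2 ≤ ∑ j ∈ Finset.univ.filter (fun j : Fin (k + 1) => j.val ≤ i), m j := hpre
      _ = ∑ j ∈ Finset.univ.filter (fun j : Fin k => j.val ≤ i), d j := by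
          rw [h1]; exact Finset.sum_congr rfl fun j _ => (hdapp j).symm
      _ ≤ ∑ j ∈ Finset.univ.filter (fun j : Fin k => j.val ≤ i), (d + b) j := h2
  · -- total degree
    have : ∑ j : Fin k, (d + b) j = ∑ j : Fin k, d j + ∑ j : Fin k, b j := by
      simp [Finsupp.add_apply, Finset.sum_add_distrib]
    rw [this, hbdeg]
    have hdsum : ∑ j : Fin k, d j = ∑ j : Fin k, m (Fin.castSucc j) :=
      Finset.sum_congr rfl fun j _ => hdapp j
    rw [hdsum]
    omega

private lemma main_lemma (A : ℕ → ℕ → ℤ) (i : ℕ) :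
    ∀ n, i + 1 ≤ n → ∀ f : MvPolynomial (Fin n) ℤ,
      (∀ m ∈ f.support,
        i + 2 ≤ ∑ j ∈ Finset.univ.filter (fun j : Fin n => j.val ≤ i), m j ∧
        ∑ j, m j = n) → Tri n A f = 0 := by
  intro n
  induction n with
  | zero => omega
  | succ k ih =>
    intro hn f hf
    rcases Nat.lt_or_ge (i + 1) (k + 1) with hlt | hge
    · -- i < k, do a step
      have hik : i < k := by omega
      show Tri k A (triStep k A f) = 0
      exact ih (by omega) _ (step_inv k A i hik f hf)
    · -- i = k : contradiction forces f = 0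
      have hik : i = k := by omega
      have hf0 : f = 0 := by
        rw [← MvPolynomial.support_eq_empty]
        by_contra hne
        obtain ⟨m, hm⟩ := Finset.nonempty_iff_ne_empty.mpr hne
        obtain ⟨hpre, htot⟩ := hf m hm
        have hfull : Finset.univ.filter (fun j : Fin (k + 1) => j.val ≤ i) = Finset.univ := by
          apply Finset.filter_true_of_mem
          intro j _
          omega
        rw [hfull, htot] at hpre
        omega
      rw [hf0]
      exact tri_zero _ _

/-- Corollary 1, second part: `T_A(x_1^{r_1} ⋯ x_k^{r_k}) = 0`
whenever `r_1 + ⋯ + r_i > i` for some `1 ≤ i < k`.  (Indices are `0`-based, so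
the `1`-based index `i` corresponds to `i.val + 1`.) -/
theorem triangular_operator_vanishing
    (k : ℕ) (A : ℕ → ℕ → ℤ) (hA : ∀ i j, j ≤ i → A i j = 0)
    (r : Fin k → ℕ) (hsum : ∑ i, r i = k)
    (i : Fin k) (hik : i.val + 1 < k)
    (hgt : i.val + 1 < ∑ j ∈ Finset.univ.filter (fun j => j ≤ i), r j) :
    Tri k A (∏ j, MvPolynomial.X j ^ r j) = 0 := by
  classical
  set u : Fin k →₀ ℕ := Finsupp.equivFunOnFinite.symm r with hu
  have huapp : ∀ j, u j = r j := fun j => rfl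
  have hprod : (∏ j, MvPolynomial.X j ^ r j : MvPolynomial (Fin k) ℤ)
      = MvPolynomial.monomial u 1 := by
    rw [← MvPolynomial.prod_X_pow_eq_monomial]
    rw [show (∏ j, MvPolynomial.X j ^ r j : MvPolynomial (Fin k) ℤ)
        = ∏ j, MvPolynomial.X j ^ u j from
      Finset.prod_congr rfl fun j _ => by rw [huapp]]
    exact (Finset.prod_subset (Finset.subset_univ u.support)
      (fun x _ hx => by rw [Finsupp.notMem_support_iff.mp hx, pow_zero])).symm
  rw [hprod]
  apply main_lemma A i.val k (by omega)
  intro m hm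
  have hm' : m = u := by
    have := MvPolynomial.support_monomial_subset hm
    exact Finset.mem_singleton.mp this
  subst hm'
  constructor
  · have : ∑ j ∈ Finset.univ.filter (fun j : Fin k => j.val ≤ i.val), u j
        = ∑ j ∈ Finset.univ.filter (fun j => j ≤ i), r j := by
      apply Finset.sum_congr
      · apply Finset.filter_congr
        intro j _
        exact Fin.le_def.symm
      · intro j _; exact huapp j
    omega
  · calc ∑ j, u j = ∑ j, r j := Finset.sum_congr rfl fun j _ => huapp j
      _ = k := hsum
end

section
/- Let A = (a_{i,j}) be a k×k strictly upper triangular integer matrix and T_A the associated triangular operator. For nonnegative integers r_1,…,r_k with Σ r_i = k, one has T_A(x_1^{r_1} ⋯ x_k^{r_k}) = Σ_{(c_{i,j}) ∈ C(r_1,…,r_k)} Π_j (Σ_i c_{i,j})! · Π_{i,j} a_{i,j}^{c_{i,j}} / c_{i,j}!, where C(r_1,…,r_k) is the set of strictly upper triangular k×k matrices (c_{i,j}) with nonnegative integer entries satisfying Σ_s c_{s,i} = r_i − 1 + Σ_j c_{i,j} for each 1 ≤ i ≤ k. -/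
open MvPolynomial

/-!
Induction on `k`. On a monomial whose last exponent is `n + 1`, one step of `T_A` multiplies the
remaining monomial by `(a_{1,k} x_1 + ⋯ + a_{k-1,k} x_{k-1})^n`, which the multinomial theorem
expands as `Σ_{|d| = n} n!/∏ d_i! · ∏ a_{i,k}^{d_i} x^d`. On the other side, a matrix of
`C(r_1,…,r_k)` (`triMatrices k r`) is determined by its last column `d`, with `|d| = r_k - 1`,
and its upper left block, which ranges over `C(r_1 + d_1,…,r_{k-1} + d_{k-1})`; its weight is that
of the block times `|d|! ∏ a_{i,k}^{d_i}/d_i!`. So both sides obey the same recursion, and both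
equal `1` for `k = 0`.
-/

open Finset

section Linearity

variable (k : ℕ) (A : ℕ → ℕ → ℤ)

lemma triStep_eq_sum (f : MvPolynomial (Fin (k + 1)) ℤ) :
    triStep k A f = (AddMonoidAlgebra.coeff f).sum fun m z =>
      if m (Fin.last k) = 0 then 0
      else C z * monomial (Finsupp.equivFunOnFinite.symm fun i : Fin k => m i.castSucc) 1 *
        (∑ i : Fin k, C (A i k) * X i) ^ (m (Fin.last k) - 1) :=
  rfl

lemma triStep_add (f g : MvPolynomial (Fin (k + 1)) ℤ) :
    triStep k A (f + g) = triStep k A f + triStep k A g := by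
  simp only [triStep_eq_sum]
  rw [AddMonoidAlgebra.coeff_add]
  apply Finsupp.sum_add_index' <;> intros <;> split <;> simp [add_mul]

lemma triStep_monomial (m : Fin (k + 1) →₀ ℕ) (z : ℤ) :
    triStep k A (monomial m z) =
      if m (Fin.last k) = 0 then 0
      else C z * monomial (Finsupp.equivFunOnFinite.symm fun i : Fin k => m i.castSucc) 1 *
        (∑ i : Fin k, C (A i k) * X i) ^ (m (Fin.last k) - 1) := by
  rw [triStep_eq_sum]
  show (Finsupp.single m z).sum _ = _
  exact Finsupp.sum_single_index (by split <;> simp)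

lemma Tri_add (f g : MvPolynomial (Fin k) ℤ) : Tri k A (f + g) = Tri k A f + Tri k A g := by
  induction k with
  | zero => simp [Tri]
  | succ k ih => simp [Tri, triStep_add, ih]

noncomputable def triAddHom : MvPolynomial (Fin k) ℤ →+ ℤ :=
  AddMonoidHom.mk' (Tri k A) (Tri_add k A)

lemma coe_triAddHom : ⇑(triAddHom k A) = Tri k A := rfl

end Linearity

lemma prod_X_pow_univ {σ R : Type*} [Fintype σ] [CommSemiring R] (r : σ → ℕ) :
    ∏ j, (X j : MvPolynomial σ R) ^ r j = monomial (Finsupp.equivFunOnFinite.symm r) 1 := by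
  rw [MvPolynomial.prod_X_pow]
  congr 2
  ext j
  exact Finsupp.indicator_of_mem (mem_univ j) _

lemma linearForm_pow {σ R : Type*} [Fintype σ] [DecidableEq σ] [CommSemiring R] (a : σ → R)
    (n : ℕ) :
    (∑ i, C (a i) * X i : MvPolynomial σ R) ^ n =
      ∑ d ∈ piAntidiag univ n,
        monomial (Finsupp.equivFunOnFinite.symm d) (Nat.multinomial univ d * ∏ i, a i ^ d i) := by
  rw [sum_pow_eq_sum_piAntidiag]
  refine sum_congr rfl fun d _ => ?_
  simp only [mul_pow, prod_mul_distrib, ← map_pow, ← map_prod, prod_X_pow_univ]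
  rw [← C_eq_coe_nat, ← mul_assoc, ← map_mul, C_mul_monomial, mul_one]

section Step

variable {k : ℕ} (A : ℕ → ℕ → ℤ) {r : Fin (k + 1) → ℕ}

lemma triStep_monomial_of_last_eq_zero (hr : r (Fin.last k) = 0) :
    triStep k A (monomial (Finsupp.equivFunOnFinite.symm r) 1) = 0 := by
  simp [triStep_monomial, hr]

lemma triStep_monomial_of_last_eq_succ {n : ℕ} (hr : r (Fin.last k) = n + 1) :
    triStep k A (monomial (Finsupp.equivFunOnFinite.symm r) 1) =
      ∑ d ∈ piAntidiag (univ : Finset (Fin k)) n,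
        monomial (Finsupp.equivFunOnFinite.symm fun i => r i.castSucc + d i)
        (Nat.multinomial univ d * ∏ i : Fin k, A i k ^ d i) := by
  simp only [triStep_monomial, Finsupp.coe_equivFunOnFinite_symm, hr, Nat.add_sub_cancel,
    Nat.add_one_ne_zero, if_false, C_1, one_mul, linearForm_pow (fun i : Fin k => A i k), mul_sum,
    monomial_mul, one_mul]
  refine sum_congr rfl fun d _ => ?_
  congr 2
  ext; simp

end Step

def triMatrices (k : ℕ) (r : Fin k → ℕ) : Set (Fin k → Fin k → ℕ) :=
  {c | (∀ i j : Fin k, j ≤ i → c i j = 0) ∧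
    ∀ i : Fin k, (∑ s, (c s i : ℤ)) = (r i : ℤ) - 1 + ∑ j, (c i j : ℤ)}

noncomputable def triWeight (A : ℕ → ℕ → ℤ) (k : ℕ) (c : Fin k → Fin k → ℕ) : ℚ :=
  (∏ j : Fin k, ((∑ i, c i j).factorial : ℚ)) *
    ∏ i : Fin k, ∏ j : Fin k, (A i j : ℚ) ^ c i j / ((c i j).factorial : ℚ)

section ExtendByColumn

variable {k : ℕ}

def extendByColumn (d : Fin k → ℕ) (c : Fin k → Fin k → ℕ) : Fin (k + 1) → Fin (k + 1) → ℕ :=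
  Fin.lastCases (fun _ => 0) fun i => Fin.lastCases (d i) (c i)

lemma extendByColumn_inj {d d' : Fin k → ℕ} {c c' : Fin k → Fin k → ℕ} :
    extendByColumn d c = extendByColumn d' c' ↔ d = d' ∧ c = c' := by
  refine ⟨fun h => ⟨?_, ?_⟩, fun h => h.1 ▸ h.2 ▸ rfl⟩
  · funext i
    simpa [extendByColumn] using congrFun (congrFun h i.castSucc) (Fin.last k)
  · funext i j
    simpa [extendByColumn] using congrFun (congrFun h i.castSucc) j.castSucc

variable (d : Fin k → ℕ) (c : Fin k → Fin k → ℕ)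

@[simp] lemma extendByColumn_last (j : Fin (k + 1)) : extendByColumn d c (Fin.last k) j = 0 := by
  simp [extendByColumn]

@[simp] lemma extendByColumn_castSucc_last (i : Fin k) :
    extendByColumn d c i.castSucc (Fin.last k) = d i := by
  simp [extendByColumn]

@[simp] lemma extendByColumn_castSucc_castSucc (i j : Fin k) :
    extendByColumn d c i.castSucc j.castSucc = c i j := by
  simp [extendByColumn]

lemma eq_extendByColumn {c : Fin (k + 1) → Fin (k + 1) → ℕ} (hc : ∀ j, c (Fin.last k) j = 0) :
    c = extendByColumn (fun i => c i.castSucc (Fin.last k))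
      (fun i j => c i.castSucc j.castSucc) := by
  funext i j
  induction i using Fin.lastCases <;> induction j using Fin.lastCases <;> simp [hc]

lemma extendByColumn_mem_triMatrices_iff {r : Fin (k + 1) → ℕ} :
    extendByColumn d c ∈ triMatrices (k + 1) r ↔
      ∑ i, d i + 1 = r (Fin.last k) ∧ c ∈ triMatrices k fun i => r i.castSucc + d i := by
  have regroup (i : Fin k) : (r i.castSucc : ℤ) - 1 + (∑ j, (c i j : ℤ) + d i) =
      r i.castSucc + d i - 1 + ∑ j, (c i j : ℤ) := by ring
  have last_col : (∑ i, (d i : ℤ)) = r (Fin.last k) - 1 ↔ ∑ i, d i + 1 = r (Fin.last k) := by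
    rw [← Nat.cast_sum]; omega
  simp only [triMatrices, Set.mem_ofPred_eq, Fin.forall_fin_succ', Fin.sum_univ_castSucc,
    extendByColumn_last, extendByColumn_castSucc_last, extendByColumn_castSucc_castSucc,
    Fin.castSucc_le_castSucc_iff, Fin.last_le_iff, Fin.castSucc_ne_last, Fin.le_last,
    imp_true_iff, IsEmpty.forall_iff, and_true, Nat.cast_zero, Nat.cast_add, add_zero,
    sum_const_zero, forall_const, regroup, last_col]
  tauto

end ExtendByColumn

section Decomposition

variable {k : ℕ} {r : Fin (k + 1) → ℕ}

lemma triMatrices_succ_eq_empty (hr : r (Fin.last k) = 0) : triMatrices (k + 1) r = ∅ := by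
  refine Set.eq_empty_of_forall_notMem fun c hc => ?_
  rw [eq_extendByColumn fun j => hc.1 _ j (Fin.le_last j), extendByColumn_mem_triMatrices_iff,
    hr] at hc
  omega

lemma triMatrices_succ_eq_biUnion {n : ℕ} (hr : r (Fin.last k) = n + 1) :
    triMatrices (k + 1) r =
      ⋃ d ∈ (piAntidiag (univ : Finset (Fin k)) n : Set (Fin k → ℕ)),
        extendByColumn d '' triMatrices k fun i => r i.castSucc + d i := by
  ext c
  simp only [Set.mem_iUnion, Set.mem_image, Finset.mem_coe, mem_piAntidiag, mem_univ,
    implies_true, and_true]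
  constructor
  · intro hc
    have hext := eq_extendByColumn fun j => hc.1 _ j (Fin.le_last j)
    rw [hext, extendByColumn_mem_triMatrices_iff, hr] at hc
    exact ⟨_, Nat.add_right_cancel hc.1, _, hc.2, hext.symm⟩
  · rintro ⟨d, hd, c, hc, rfl⟩
    rw [extendByColumn_mem_triMatrices_iff, hr]
    exact ⟨congrArg (· + 1) hd, hc⟩

lemma triMatrices_finite (r : Fin k → ℕ) : (triMatrices k r).Finite := by
  induction k with
  | zero => exact Set.toFinite _
  | succ k ih =>
    rcases h : r (Fin.last k) with _ | n
    · simp [triMatrices_succ_eq_empty h]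
    · rw [triMatrices_succ_eq_biUnion h]
      exact (finite_toSet _).biUnion fun d _ => (ih _).image _

end Decomposition

lemma triWeight_extendByColumn (A : ℕ → ℕ → ℤ) {k : ℕ} (d : Fin k → ℕ) (c : Fin k → Fin k → ℕ) :
    triWeight A (k + 1) (extendByColumn d c) =
      ((∑ i, d i).factorial * ∏ i : Fin k, (A i k : ℚ) ^ d i / (d i).factorial) *
        triWeight A k c := by
  simp only [triWeight, Fin.prod_univ_castSucc, Fin.sum_univ_castSucc, extendByColumn_last,
    extendByColumn_castSucc_last, extendByColumn_castSucc_castSucc, add_zero, pow_zero,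
    Nat.factorial_zero, Nat.cast_one, div_one, prod_const_one, mul_one, prod_mul_distrib,
    Fin.val_castSucc, Fin.val_last]
  ring

lemma finsum_triWeight_succ (A : ℕ → ℕ → ℤ) {k n : ℕ} {r : Fin (k + 1) → ℕ}
    (hr : r (Fin.last k) = n + 1) :
    ∑ᶠ c ∈ triMatrices (k + 1) r, triWeight A (k + 1) c =
      ∑ d ∈ piAntidiag (univ : Finset (Fin k)) n,
        (n.factorial * ∏ i : Fin k, (A i k : ℚ) ^ d i / (d i).factorial) *
          ∑ᶠ c ∈ triMatrices k (fun i => r i.castSucc + d i), triWeight A k c := by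
  have hdisj : (piAntidiag (univ : Finset (Fin k)) n : Set (Fin k → ℕ)).PairwiseDisjoint
      fun d => extendByColumn d '' triMatrices k fun i => r i.castSucc + d i := by
    rintro d - d' - hne
    refine Set.disjoint_left.2 ?_
    rintro _ ⟨c, -, rfl⟩ ⟨c', -, h⟩
    exact hne (extendByColumn_inj.1 h).1.symm
  rw [triMatrices_succ_eq_biUnion hr, finsum_mem_biUnion hdisj (finite_toSet _)
    fun d _ => (triMatrices_finite _).image _, finsum_mem_coe_finset]
  refine sum_congr rfl fun d hd => ?_
  rw [finsum_mem_image fun c _ c' _ h => (extendByColumn_inj.1 h).2, mul_finsum_mem]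
  simp only [triWeight_extendByColumn, (mem_piAntidiag.1 hd).1]

lemma Nat.cast_multinomial_eq_div {α K : Type*} [Field K] [CharZero K] (s : Finset α)
    (f : α → ℕ) :
    (Nat.multinomial s f : K) = (∑ i ∈ s, f i).factorial / ∏ i ∈ s, ((f i).factorial : K) := by
  rw [eq_div_iff (prod_ne_zero_iff.2 fun i _ => Nat.cast_ne_zero.2 (Nat.factorial_ne_zero _)),
    mul_comm]
  exact_mod_cast Nat.multinomial_spec s f

lemma Tri_monomial (A : ℕ → ℕ → ℤ) (k : ℕ) (r : Fin k → ℕ) :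
    (Tri k A (monomial (Finsupp.equivFunOnFinite.symm r) 1) : ℚ) =
      ∑ᶠ c ∈ triMatrices k r, triWeight A k c := by
  induction k with
  | zero =>
    have hC : triMatrices 0 r = Set.univ := by ext; simp [triMatrices]
    have h0 : Finsupp.equivFunOnFinite.symm r = 0 := Subsingleton.elim _ _
    simp [Tri, hC, h0, finsum_unique, triWeight]
  | succ k ih =>
    rcases h : r (Fin.last k) with _ | n
    · simp [Tri, triStep_monomial_of_last_eq_zero A h, triMatrices_succ_eq_empty h,
        ← coe_triAddHom]
    · rw [Tri, triStep_monomial_of_last_eq_succ A h, finsum_triWeight_succ A h, ← coe_triAddHom,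
        map_sum, Int.cast_sum]
      refine sum_congr rfl fun d hd => ?_
      rw [← mul_one (Nat.multinomial _ _ * _ : ℤ), ← smul_eq_mul, ← smul_monomial, map_zsmul,
        smul_eq_mul, Int.cast_mul, coe_triAddHom, ih]
      push_cast
      rw [Nat.cast_multinomial_eq_div, (mem_piAntidiag.1 hd).1, prod_div_distrib]
      ring

theorem triangular_operator_closed_formula_general
    (k : ℕ) (A : ℕ → ℕ → ℤ)
    (r : Fin k → ℕ) :
    (Tri k A (∏ j, MvPolynomial.X j ^ r j) : ℚ) =
      ∑ᶠ c ∈ {c : Fin k → Fin k → ℕ |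
          (∀ i j : Fin k, j ≤ i → c i j = 0) ∧
          ∀ i : Fin k, (∑ s, (c s i : ℤ)) = (r i : ℤ) - 1 + ∑ j, (c i j : ℤ)},
        (∏ j : Fin k, (Nat.factorial (∑ i, c i j) : ℚ)) *
          ∏ i : Fin k, ∏ j : Fin k,
            (A i j : ℚ) ^ (c i j) / (Nat.factorial (c i j) : ℚ) := by
  rw [prod_X_pow_univ]
  exact Tri_monomial A k r

/-- Corollary 2: the closed formula for the triangular operator.
`C(r_1,…,r_k)` is the set of strictly upper triangular matrices `(c_{i,j})` of
nonnegative integers with `Σ_s c_{s,i} = r_i − 1 + Σ_j c_{i,j}` for all `i`, and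

`T_A(x_1^{r_1}⋯x_k^{r_k}) = Σ_{c ∈ C} Π_j (Σ_i c_{i,j})! · Π_{i,j} a_{i,j}^{c_{i,j}}/c_{i,j}!`. -/
theorem triangular_operator_closed_formula
    (k : ℕ) (A : ℕ → ℕ → ℤ) (hA : ∀ i j, j ≤ i → A i j = 0)
    (r : Fin k → ℕ) (hsum : ∑ i, r i = k) :
    (Tri k A (∏ j, MvPolynomial.X j ^ r j) : ℚ) =
      ∑ᶠ c ∈ {c : Fin k → Fin k → ℕ |
          (∀ i j : Fin k, j ≤ i → c i j = 0) ∧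
          ∀ i : Fin k, (∑ s, (c s i : ℤ)) = (r i : ℤ) - 1 + ∑ j, (c i j : ℤ)},
        (∏ j : Fin k, (Nat.factorial (∑ i, c i j) : ℚ)) *
          ∏ i : Fin k, ∏ j : Fin k,
            (A i j : ℚ) ^ (c i j) / (Nat.factorial (c i j) : ℚ) :=
  triangular_operator_closed_formula_general k A r
end

section
/- Let H* be a graded-commutative ring, e an element of even degree r, and θ: H* → H* an additive degree-(−r) operator satisfying: θ(e) = 2, the twisted Leibniz identity θ(z₁z₂) = θ(z₁)z₂ + (z₁ − eθ(z₁))θ(z₂), and θ(z − eθ(z)) = −θ(z) for all z (the case of even r in equation (3.6)). Then e·θ(θ(z)) = 0 for all z, and consequently 2θ(θ(z)) = 0 for all z. -/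
/-- Lemma 3.2 (3)–(4), even case: if `θ(e) = 2`, `θ` satisfies the
twisted Leibniz identity, and `θ(z − eθ(z)) = −θ(z)` for all `z`, then
`e·θ(θ(z)) = 0` and `2θ(θ(z)) = 0` for all `z`. -/
theorem divided_difference_two_torsion
    (R : Type*) [CommRing R] (e : R) (θ : R →+ R)
    (hE : θ e = 2)
    (hL : ∀ z₁ z₂, θ (z₁ * z₂) = θ z₁ * z₂ + (z₁ - e * θ z₁) * θ z₂)
    (hS : ∀ z, θ (z - e * θ z) = -θ z) :
    ∀ z, e * θ (θ z) = 0 ∧ 2 • θ (θ z) = 0 := by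
  have key : ∀ z, e * θ (θ z) = 0 := by
    intro z
    have h1 : θ (e * θ z) = 2 * θ z - e * θ (θ z) := by
      rw [hL e (θ z), hE]; ring
    have h2 : θ (z - e * θ z) = θ z - θ (e * θ z) := by
      simp [map_sub]
    have h3 := hS z
    rw [h2, h1] at h3
    linear_combination h3
  intro z
  refine ⟨key z, ?_⟩
  have h1 : θ (e * θ (θ z)) = 2 * θ (θ z) - e * θ (θ (θ z)) := by
    rw [hL e (θ (θ z)), hE]; ring
  rw [key z, map_zero] at h1
  have h2 := key (θ z)
  rw [two_smul]
  linear_combination -h1 + h2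
end

section
/- Let H* be a commutative graded ring, e an element of degree r, and θ: H* → H* an additive degree-(−r) map satisfying the two identities θ(z₁z₂) = θ(z₁)z₂ + z₁θ(z₂) − eθ(z₁)θ(z₂) and θ(z − eθ(z)) = (−1)^{r−1}θ(z). If r is odd and H* has no elements of negative degree (so θ(θ(e)) = 0 since it lies in degree −r), then θ(e) = 0; if r is even, then θ(e) ∈ {0, 2} (θ(e) satisfies θ(e)² = 2θ(e) in the degree-0 component ℤ). -/
/-- Lemma 3.2 (3): let `θ` be an additive degree `−r` operator on
`H*` satisfying `θ(z₁z₂) = θ(z₁)z₂ + z₁θ(z₂) − eθ(z₁)θ(z₂)` and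
`θ(z − eθ(z)) = (−1)^{r−1}θ(z)`.  Since `θ(e)` lies in `H⁰ = ℤ` it is an integer
`m` (the canonical map `ℤ → H*` being injective onto `H⁰`), and `θ(θ(e)) = 0`
as it lies in negative degree.  Then `m = 0` if `r` is odd, and `m ∈ {0, 2}`
(from `m² = 2m`) if `r` is even. -/
theorem divided_difference_value_on_euler_class
    (R : Type*) [CommRing R] (e : R) (r : ℕ) (θ : R →+ R)
    (hL : ∀ z₁ z₂, θ (z₁ * z₂) = θ z₁ * z₂ + z₁ * θ z₂ - e * θ z₁ * θ z₂)
    (hS : ∀ z, θ (z - e * θ z) = ((-1 : ℤ) ^ (r - 1)) • θ z)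
    (m : ℤ) (hm : θ e = (m : R))
    (hinj : Function.Injective (Int.cast : ℤ → R))
    (hneg : θ (θ e) = 0) :
    (Odd r → m = 0) ∧ (Even r → m ^ 2 = 2 * m ∧ (m = 0 ∨ m = 2)) := by
  have key := hS e
  rw [hm, show e * (m:R) = m • e by rw [zsmul_eq_mul, mul_comm], map_sub, map_zsmul, hm,
    zsmul_eq_mul, zsmul_eq_mul] at key
  have key' : (m : ℤ) - m * m = (-1)^(r-1) * m := by
    apply hinj; push_cast; exact_mod_cast key
  constructor
  · intro hodd
    have : (-1:ℤ)^(r-1) = 1 := Even.neg_one_pow (by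
      rcases hodd with ⟨k,hk⟩; exact ⟨k, by omega⟩)
    rw [this] at key'; nlinarith
  · intro heven
    rcases Nat.eq_zero_or_pos r with h0 | hpos
    · have : (-1:ℤ)^(r-1) = 1 := by simp [h0]
      rw [this] at key'
      have : m = 0 := by nlinarith
      simp [this]
    · have : (-1:ℤ)^(r-1) = -1 := Odd.neg_one_pow (by
        rcases heven with ⟨k,hk⟩; exact ⟨k-1, by omega⟩)
      rw [this] at key'
      constructor
      · nlinarith
      · have : m * (m - 2) = 0 := by nlinarith
        rcases mul_eq_zero.mp this with h|h
        · left; exact h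
        · right; omega
end
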